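/- Orthogonal Procrustes: given B ∈ ℂ^{p×M} with p ≤ M and singular value decomposition B = P Ξ Q^H (P ∈ ℂ^{p×p}, Q ∈ ℂ^{M×M} unitary, Ξ diagonal with nonnegative entries), the matrix Γ = P Q_{(:,1:p)}^H minimizes ‖B − Γ‖_F² over all Γ ∈ ℂ^{p×M} with Γ Γ^H = I_p. -/

import Mathlib

open Matrix

/-- Squared Frobenius norm of a complex matrix. -/
noncomputable def frobSq {m n : Type*} [Fintype m] [Fintype n]
    (X : Matrix m n ℂ) : ℝ := (Matrix.trace (Xᴴ * X)).re

/-!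
Expanding the square, `‖B - Γ‖_F² = ‖B‖_F² + p - 2 Re tr (Bᴴ Γ)` for every `Γ` with orthonormal
rows, so one has to maximise `Re tr (Bᴴ Γ)`. Substituting the SVD, `Re tr (Bᴴ Γ) = Re tr (Ξᴴ Z)`
with `Z = Pᴴ Γ Q`, which again has orthonormal rows, so its entries have real part at most `1`.
As `Ξ` is rectangular-diagonal with entries `ξᵢ ≥ 0`, this gives `Re tr (Ξᴴ Z) = ∑ ξᵢ Re Zᵢᵢ ≤ ∑ ξᵢ`,
with equality for `Z = [I 0]`, i.e. `Γ = P Q_{(:,1:p)}ᴴ`.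
-/

open scoped ComplexOrder

section Complex

variable {m n : Type*} [Fintype n]

theorem frobSq_sub [Fintype m] (A B : Matrix m n ℂ) :
    frobSq (A - B) = frobSq A + frobSq B - 2 * (trace (Aᴴ * B)).re := by
  have hswap : trace (Bᴴ * A) = star (trace (Aᴴ * B)) := by
    rw [← trace_conjTranspose, conjTranspose_mul, conjTranspose_conjTranspose]
  simp only [frobSq, conjTranspose_sub, Matrix.sub_mul, Matrix.mul_sub, trace_sub,
    Complex.sub_re, hswap, Complex.star_def, Complex.conj_re]
  ring

theorem frobSq_eq_card_of_mul_conjTranspose_eq_one [Fintype m] [DecidableEq m] {Γ : Matrix m n ℂ}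
    (hΓ : Γ * Γᴴ = 1) : frobSq Γ = Fintype.card m := by
  rw [frobSq, trace_mul_comm, hΓ, trace_one]
  simp

theorem re_apply_le_one_of_mul_conjTranspose_eq_one [DecidableEq m] {Z : Matrix m n ℂ}
    (hZ : Z * Zᴴ = 1) (i : m) (j : n) : (Z i j).re ≤ 1 := by
  have hrow : ∑ k, ‖Z i k‖ ^ 2 = 1 := by
    have := congrArg (fun X : Matrix m m ℂ => (X i i).re) hZ
    simpa [mul_apply, Complex.mul_conj, Complex.normSq_eq_norm_sq, ← Complex.ofReal_pow] using this
  have hentry : ‖Z i j‖ ^ 2 ≤ 1 :=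
    hrow ▸ Finset.single_le_sum (fun k _ => sq_nonneg ‖Z i k‖) (Finset.mem_univ j)
  have hnorm : ‖Z i j‖ ≤ 1 := by nlinarith [norm_nonneg (Z i j)]
  exact (Complex.re_le_norm _).trans hnorm

theorem trace_conjTranspose_mul_of_apply_ne_eq_zero [Fintype m] (f : m → n) {Ξ : Matrix m n ℂ}
    (hΞ : ∀ i j, j ≠ f i → Ξ i j = 0) (Z : Matrix m n ℂ) :
    trace (Ξᴴ * Z) = ∑ i, star (Ξ i (f i)) * Z i (f i) := by
  rw [trace_mul_comm, trace]
  refine Finset.sum_congr rfl fun i _ => ?_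
  rw [diag_apply, mul_apply, Finset.sum_eq_single (f i)]
  · rw [conjTranspose_apply, mul_comm]
  · intro j _ hj
    rw [conjTranspose_apply, hΞ i j hj, star_zero, mul_zero]
  · simp

/-- For the inclusion `f : Fin p → Fin M`, `(1 : Matrix n n ℂ).submatrix f id` is `[I 0]`. -/
theorem re_trace_conjTranspose_mul_le [Fintype m] [DecidableEq m] [DecidableEq n] (f : m → n)
    {Ξ : Matrix m n ℂ} (hΞ : ∀ i j, j ≠ f i → Ξ i j = 0) (hΞ_nonneg : ∀ i, 0 ≤ Ξ i (f i))
    {Z : Matrix m n ℂ} (hZ : Z * Zᴴ = 1) :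
    (trace (Ξᴴ * Z)).re ≤ (trace (Ξᴴ * (1 : Matrix n n ℂ).submatrix f id)).re := by
  rw [trace_conjTranspose_mul_of_apply_ne_eq_zero f hΞ,
    trace_conjTranspose_mul_of_apply_ne_eq_zero f hΞ, Complex.re_sum, Complex.re_sum]
  refine Finset.sum_le_sum fun i _ => ?_
  have hreal : Ξ i (f i) = ((Ξ i (f i)).re : ℂ) :=
    Complex.eq_re_of_ofReal_le (by exact_mod_cast hΞ_nonneg i)
  have hre_nonneg : 0 ≤ (Ξ i (f i)).re := (Complex.nonneg_iff.mp (hΞ_nonneg i)).1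
  rw [hreal, Complex.star_def, Complex.conj_ofReal, Complex.re_ofReal_mul,
    Complex.re_ofReal_mul, submatrix_apply, id, one_apply_eq, Complex.one_re, mul_one]
  exact mul_le_of_le_one_right hre_nonneg (re_apply_le_one_of_mul_conjTranspose_eq_one hZ i _)

end Complex

section StarRing

variable {R : Type*} [CommRing R] [StarRing R] {k m n l : Type*} [Fintype n]

theorem mul_mul_mul_conjTranspose_eq_one [Fintype m] [Fintype l] [DecidableEq k] [DecidableEq m]
    [DecidableEq n]
    {U : Matrix k m R} {Z : Matrix m n R} {V : Matrix n l R}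
    (hU : U * Uᴴ = 1) (hZ : Z * Zᴴ = 1) (hV : V * Vᴴ = 1) :
    (U * Z * V) * (U * Z * V)ᴴ = 1 := by
  calc (U * Z * V) * (U * Z * V)ᴴ = U * (Z * (V * Vᴴ) * Zᴴ) * Uᴴ := by
        simp only [conjTranspose_mul, Matrix.mul_assoc]
    _ = 1 := by rw [hV, Matrix.mul_one, hZ, Matrix.mul_one, hU]

theorem trace_conjTranspose_mul_mul_conjTranspose_mul [Fintype k] [Fintype m] [Fintype l]
    (P : Matrix k m R) (Ξ : Matrix m n R) (Q : Matrix l n R) (Γ : Matrix k l R) :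
    trace ((P * Ξ * Qᴴ)ᴴ * Γ) = trace (Ξᴴ * (Pᴴ * Γ * Q)) := by
  rw [conjTranspose_mul, conjTranspose_mul, conjTranspose_conjTranspose, Matrix.mul_assoc,
    trace_mul_comm]
  simp only [Matrix.mul_assoc]

theorem submatrix_one_mul_conjTranspose_eq_one [DecidableEq m] [DecidableEq n] {f : m → n}
    (hf : Function.Injective f) :
    (1 : Matrix n n R).submatrix f id * ((1 : Matrix n n R).submatrix f id)ᴴ = 1 := by
  rw [conjTranspose_submatrix, conjTranspose_one, ← submatrix_mul _ _ _ _ _ Function.bijective_id,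
    Matrix.one_mul, submatrix_one f hf]

theorem conjTranspose_submatrix_id [DecidableEq n] (V : Matrix l n R) (f : m → n) :
    (V.submatrix id f)ᴴ = (1 : Matrix n n R).submatrix f id * Vᴴ := by
  rw [← submatrix_id_id Vᴴ, ← submatrix_mul _ _ _ _ _ Function.bijective_id, Matrix.one_mul,
    conjTranspose_submatrix]

end StarRing

/-- Orthogonal Procrustes: if `B = P Ξ Qᴴ` is an SVD of `B ∈ ℂ^{p×M}` (`p ≤ M`,
`P`, `Q` unitary, `Ξ` "diagonal" with nonnegative real entries), then
`Γ₀ = P (Q_{(:,1:p)})ᴴ` minimizes `‖B − Γ‖_F²` over all `Γ` with `Γ Γᴴ = I_p`. -/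
theorem stmt11 (p M : ℕ) (hp : p ≤ M) (B : Matrix (Fin p) (Fin M) ℂ)
    (P : Matrix.unitaryGroup (Fin p) ℂ) (Q : Matrix.unitaryGroup (Fin M) ℂ)
    (Ξ : Matrix (Fin p) (Fin M) ℂ)
    (hdiag : ∀ (i : Fin p) (j : Fin M), (i : ℕ) ≠ (j : ℕ) → Ξ i j = 0)
    (hpos : ∀ (i : Fin p) (j : Fin M), (i : ℕ) = (j : ℕ) → ∃ r : ℝ, 0 ≤ r ∧ Ξ i j = (r : ℂ))
    (hB : B = (P : Matrix (Fin p) (Fin p) ℂ) * Ξ * (Q : Matrix (Fin M) (Fin M) ℂ)ᴴ) :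
    ∀ Γ : Matrix (Fin p) (Fin M) ℂ, Γ * Γᴴ = 1 →
      frobSq (B - (P : Matrix (Fin p) (Fin p) ℂ) *
          ((Q : Matrix (Fin M) (Fin M) ℂ).submatrix id (Fin.castLE hp))ᴴ)
        ≤ frobSq (B - Γ) := by
  intro Γ hΓ
  set U := (P : Matrix (Fin p) (Fin p) ℂ)
  set V := (Q : Matrix (Fin M) (Fin M) ℂ)
  set f := Fin.castLE hp
  set E : Matrix (Fin p) (Fin M) ℂ := (1 : Matrix (Fin M) (Fin M) ℂ).submatrix f id
  have hU : U * Uᴴ = 1 := Unitary.coe_mul_star_self P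
  have hU' : Uᴴ * U = 1 := Unitary.coe_star_mul_self P
  have hV : V * Vᴴ = 1 := Unitary.coe_mul_star_self Q
  have hV' : Vᴴ * V = 1 := Unitary.coe_star_mul_self Q
  have hE : E * Eᴴ = 1 := submatrix_one_mul_conjTranspose_eq_one (Fin.castLE_injective hp)
  have hΞ : ∀ i j, j ≠ f i → Ξ i j = 0 := fun i j hj =>
    hdiag i j fun hij => hj (Fin.ext hij.symm)
  have hΞ_nonneg : ∀ i, 0 ≤ Ξ i (f i) := fun i => by
    obtain ⟨r, hr, hΞr⟩ := hpos i (f i) rfl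
    exact hΞr ▸ Complex.zero_le_real.mpr hr
  rw [conjTranspose_submatrix_id, ← Matrix.mul_assoc, frobSq_sub, frobSq_sub,
    frobSq_eq_card_of_mul_conjTranspose_eq_one hΓ,
    frobSq_eq_card_of_mul_conjTranspose_eq_one (mul_mul_mul_conjTranspose_eq_one hU hE
      (by rwa [conjTranspose_conjTranspose]))]
  suffices (trace (Bᴴ * Γ)).re ≤ (trace (Bᴴ * (U * E * Vᴴ))).re by linarith
  have hE_conj : Uᴴ * (U * E * Vᴴ) * V = E := by
    rw [← Matrix.mul_assoc, ← Matrix.mul_assoc, hU', Matrix.one_mul, Matrix.mul_assoc, hV',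
      Matrix.mul_one]
  rw [hB, trace_conjTranspose_mul_mul_conjTranspose_mul,
    trace_conjTranspose_mul_mul_conjTranspose_mul, hE_conj]
  exact re_trace_conjTranspose_mul_le f hΞ hΞ_nonneg (mul_mul_mul_conjTranspose_eq_one
    (by rwa [conjTranspose_conjTranspose]) hΓ hV)
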